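/- Let s, t, k be positive integers with s/2 < k ≤ s, q = |Σ|. Let A_k ⊆ Σ^{s+k} be the set of strings x for which some y with d_H(x,y) ≤ t satisfies y_{[s]} = y_{k+[s]}. Then |A_k| ≤ q^k · ∑_{i=0}^{t} C(2s−k, i)·(q−1)^i. -/

import Mathlib

/-!
If `x ∈ A_k` is within distance `t` of the `k`-periodic `y`, let `y'` be the `k`-periodic
string whose period is `y` on `I₁ = [0, s - k)` and `x` on `I₂ = [s - k, k)`. Then `y' = y`
on `I₁`, `I₃`, `I₅` and `y' = x` on `I₂`, while a mismatch of `x` and `y'` at `i ∈ I₄` that is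
not one of `x` and `y` gives one at `i - k ∈ I₂`; hence `d(x, y') ≤ d(x, y) ≤ t`. So `x` lies in
the Hamming ball of radius `t` about one of the `q ^ k` periodic strings `y'` and agrees with
its centre on `I₂`, which leaves at most `∑_{i ≤ t} C(2s - k, i) (q - 1) ^ i` choices for the
`2s - k` coordinates of `x` off `I₂`.
-/

open Finset

theorem card_hammingBall_le {ι S : Type*} [Fintype ι] [DecidableEq ι] [Fintype S]
    [DecidableEq S] (c : ι → S) (t : ℕ) :
    #{w : ι → S | hammingDist w c ≤ t} ≤
      ∑ i ∈ range (t + 1), (Fintype.card ι).choose i * (Fintype.card S - 1) ^ i := by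
  let changedOn (A : Finset ι) : Finset (ι → S) :=
    Fintype.piFinset fun j => if j ∈ A then univ.erase (c j) else {c j}
  have hsub : ({w | hammingDist w c ≤ t} : Finset (ι → S)) ⊆
      (range (t + 1)).biUnion fun i => (powersetCard i univ).biUnion changedOn := by
    intro w hw
    simp only [mem_filter, mem_univ, true_and] at hw
    simp only [mem_biUnion, mem_range, mem_powersetCard, subset_univ, true_and]
    refine ⟨_, Nat.lt_succ_of_le hw, ({j | w j ≠ c j} : Finset ι), rfl, ?_⟩
    simp only [changedOn, Fintype.mem_piFinset]
    intro j
    by_cases h : w j = c j <;> simp [h]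
  calc #{w : ι → S | hammingDist w c ≤ t}
      ≤ ∑ i ∈ range (t + 1), ∑ A ∈ powersetCard i univ, #(changedOn A) :=
        (card_le_card hsub).trans <| card_biUnion_le.trans <|
          sum_le_sum fun i _ => card_biUnion_le
    _ = ∑ i ∈ range (t + 1), (Fintype.card ι).choose i * (Fintype.card S - 1) ^ i := by
        refine sum_congr rfl fun i _ => ?_
        rw [← card_univ, ← card_powersetCard, ← smul_eq_mul, ← sum_const]
        refine sum_congr rfl fun A hA => ?_
        rw [← (mem_powersetCard.mp hA).2]
        simp [changedOn, apply_ite card]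

theorem hammingDist_subtype_le {ι S : Type*} [Fintype ι] [DecidableEq S] (p : ι → Prop)
    [DecidablePred p] (x y : ι → S) :
    hammingDist (fun j : Subtype p => x j) (fun j => y j) ≤ hammingDist x y :=
  card_le_card_of_injOn Subtype.val (fun j hj => by simpa using hj) Subtype.val_injective.injOn

def ballAgreeingOn {ι S : Type*} [Fintype ι] [DecidableEq ι] [Fintype S] [DecidableEq S]
    (E : Finset ι) (c : ι → S) (t : ℕ) : Finset (ι → S) :=
  {x | (∀ i ∈ E, x i = c i) ∧ hammingDist x c ≤ t}

theorem mem_ballAgreeingOn {ι S : Type*} [Fintype ι] [DecidableEq ι] [Fintype S]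
    [DecidableEq S] {E : Finset ι} {c x : ι → S} {t : ℕ} :
    x ∈ ballAgreeingOn E c t ↔ (∀ i ∈ E, x i = c i) ∧ hammingDist x c ≤ t := by
  simp only [ballAgreeingOn, mem_filter, mem_univ, true_and]

theorem card_ballAgreeingOn_le {ι S : Type*} [Fintype ι] [DecidableEq ι] [Fintype S]
    [DecidableEq S] (E : Finset ι) (c : ι → S) (t : ℕ) :
    #(ballAgreeingOn E c t) ≤
      ∑ i ∈ range (t + 1), (Fintype.card ι - #E).choose i * (Fintype.card S - 1) ^ i := by
  have hcard : Fintype.card {j // j ∉ E} = Fintype.card ι - #E := by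
    rw [Fintype.card_subtype_compl, Fintype.card_coe]
  rw [← hcard]
  refine le_trans (card_le_card_of_injOn (fun x (j : {j // j ∉ E}) => x j) ?_ ?_)
    (card_hammingBall_le (fun j : {j // j ∉ E} => c j) t)
  · intro x hx
    rw [mem_coe, mem_ballAgreeingOn] at hx
    simp only [coe_filter, mem_univ, true_and, Set.mem_ofPred_eq]
    exact (hammingDist_subtype_le _ x c).trans hx.2
  · intro x₁ hx₁ x₂ hx₂ h
    rw [mem_coe, mem_ballAgreeingOn] at hx₁ hx₂
    funext j
    by_cases hj : j ∈ E
    · rw [hx₁.1 j hj, hx₂.1 j hj]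
    · exact congrFun h ⟨j, hj⟩

section Periodic

variable {S : Type*}

def periodicExt {n k : ℕ} (hk : 0 < k) (z : Fin k → S) : Fin n → S :=
  fun i => z ⟨i % k, Nat.mod_lt _ hk⟩

theorem eq_periodicExt_of_periodic {n k : ℕ} (hk : 0 < k) (hkn : k ≤ n) {y : Fin n → S}
    (hy : ∀ i (hi : k + i < n), y ⟨i, by omega⟩ = y ⟨k + i, hi⟩) :
    periodicExt hk (fun j => y (Fin.castLE hkn j)) = y := by
  funext ⟨i, hi⟩
  induction i using Nat.strong_induction_on with
  | _ i ih =>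
    rcases lt_or_ge i k with hik | hik
    · simp only [periodicExt, Nat.mod_eq_of_lt hik, Fin.castLE_mk]
    · obtain ⟨j, rfl⟩ := Nat.exists_eq_add_of_le hik
      rw [← hy j hi, ← ih j (by omega) (by omega)]
      simp only [periodicExt, Nat.add_mod_left]

variable {s k : ℕ}

-- The period of the paper's `y'`: `y` on `I₁ = [0, s - k)` and `x` on `I₂ = [s - k, k)`.
def mixPeriod (s : ℕ) (x y : Fin (s + k) → S) : Fin k → S :=
  fun j => if s - k ≤ j then x (Fin.castLE (Nat.le_add_left k s) j)
    else y (Fin.castLE (Nat.le_add_left k s) j)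

theorem periodicExt_mixPeriod_of_le_of_lt (hk : 0 < k) (x y : Fin (s + k) → S)
    {i : Fin (s + k)} (hi₁ : s - k ≤ i) (hi₂ : i < k) :
    periodicExt hk (mixPeriod s x y) i = x i := by
  simp only [periodicExt, mixPeriod, Nat.mod_eq_of_lt hi₂, if_pos hi₁, Fin.castLE_mk]

theorem ne_sub_of_ne_periodicExt_mixPeriod (hk : 0 < k) (hsk : s ≤ 2 * k)
    (x y : Fin (s + k) → S) (hy : ∀ i (hi : k + i < s + k), y ⟨i, by omega⟩ = y ⟨k + i, hi⟩)
    (i : Fin (s + k)) (hne : x i ≠ periodicExt hk (mixPeriod s x y) i) (heq : x i = y i) :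
    s ≤ i ∧ (i : ℕ) < 2 * k ∧ x ⟨i - k, by omega⟩ ≠ y ⟨i - k, by omega⟩ := by
  have hi := i.isLt
  have hmk : (i : ℕ) % k < k := Nat.mod_lt _ hk
  have hyi : y ⟨i % k, by omega⟩ = y i :=
    congrFun (eq_periodicExt_of_periodic hk (Nat.le_add_left k s) hy) i
  have hy'i : periodicExt hk (mixPeriod s x y) i =
      if s - k ≤ i % k then x ⟨i % k, by omega⟩ else y ⟨i % k, by omega⟩ := rfl
  by_cases hc : s - k ≤ i % k
  · rw [if_pos hc] at hy'i
    have hdm := Nat.div_add_mod (i : ℕ) k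
    have hdiv : (i : ℕ) / k < 3 := Nat.div_lt_of_lt_mul (by omega)
    generalize (i : ℕ) / k = d at hdm hdiv
    interval_cases d
    · exact absurd (hy'i.trans (congrArg x (Fin.ext (by simp only; omega)))).symm hne
    · refine ⟨by omega, by omega, fun h => hne ?_⟩
      have e : (⟨i % k, by omega⟩ : Fin (s + k)) = ⟨i - k, by omega⟩ :=
        Fin.mk.inj_iff.mpr (by omega)
      rw [hy'i, e, h, ← e, hyi, heq]
    · omega
  · rw [if_neg hc, hyi] at hy'i
    exact absurd (hy'i.trans heq.symm).symm hne

theorem hammingDist_periodicExt_mixPeriod_le [Fintype S] [DecidableEq S] (hk : 0 < k)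
    (hsk : s ≤ 2 * k) (x y : Fin (s + k) → S)
    (hy : ∀ i (hi : k + i < s + k), y ⟨i, by omega⟩ = y ⟨k + i, hi⟩) :
    hammingDist x (periodicExt hk (mixPeriod s x y)) ≤ hammingDist x y := by
  have shifted := ne_sub_of_ne_periodicExt_mixPeriod hk hsk x y hy
  have not_mid : ∀ i : Fin (s + k), x i ≠ periodicExt hk (mixPeriod s x y) i →
      ¬ (s - k ≤ i ∧ (i : ℕ) < k) :=
    fun i hne hi => hne (periodicExt_mixPeriod_of_le_of_lt hk x y hi.1 hi.2).symm
  -- the shifted mismatches land in `I₂`, where `x` agrees with `y'`, so none of them collides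
  -- with an unshifted one
  refine card_le_card_of_injOn (fun i => if x i = y i then ⟨i - k, by omega⟩ else i) ?_ ?_
  · intro i hi
    simp only [coe_filter, mem_univ, true_and, Set.mem_ofPred_eq] at hi ⊢
    split_ifs with h
    · exact (shifted i hi h).2.2
    · exact h
  · intro i₁ hi₁ i₂ hi₂ h
    simp only [coe_filter, mem_univ, true_and, Set.mem_ofPred_eq] at hi₁ hi₂
    have hmid₁ := not_mid i₁ hi₁
    have hmid₂ := not_mid i₂ hi₂
    dsimp only at h
    split_ifs at h with h₁ h₂ h₂ <;> simp only [Fin.ext_iff] at h ⊢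
    · have := shifted i₁ hi₁ h₁; have := shifted i₂ hi₂ h₂; omega
    · have := shifted i₁ hi₁ h₁; omega
    · have := shifted i₂ hi₂ h₂; omega
    · exact h

end Periodic

open scoped Classical

/-- improved upper bound on the size of
`A_k = {x ∈ Σ^{s+k} : ∃ y, d_H(x,y) ≤ t and y has period k}` when `s/2 < k ≤ s`:
`|A_k| ≤ q^k · ∑_{i=0}^{t} C(2s-k,i)·(q-1)^i`. -/
theorem stmt13 {S : Type*} [Fintype S] [DecidableEq S]
    (s t k q : ℕ) (hq : q = Fintype.card S)
    (hk0 : 0 < k) (hk : k ≤ s) (hk2 : s < 2 * k) :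
    (Finset.univ.filter (fun x : Fin (s + k) → S =>
        ∃ y : Fin (s + k) → S, hammingDist x y ≤ t ∧
          ∀ i, (hi : i < s) → y ⟨i, by omega⟩ = y ⟨k + i, by omega⟩)).card ≤
      q ^ k * ∑ i ∈ Finset.range (t + 1), Nat.choose (2 * s - k) i * (q - 1) ^ i := by
  set I₂ : Finset (Fin (s + k)) := Ico ⟨s - k, by omega⟩ ⟨k, by omega⟩
  have hcard : Fintype.card (Fin (s + k)) - #I₂ = 2 * s - k := by
    simp only [I₂, Fin.card_Ico, Fintype.card_fin]
    omega
  refine (card_le_card (t := univ.biUnion fun z : Fin k → S =>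
    ballAgreeingOn I₂ (periodicExt hk0 z) t) ?_).trans (card_biUnion_le.trans ?_)
  · intro x hx
    obtain ⟨y, hd, hy⟩ := (mem_filter.mp hx).2
    refine mem_biUnion.mpr ⟨mixPeriod s x y, mem_univ _, mem_ballAgreeingOn.mpr ⟨?_, ?_⟩⟩
    · intro i hi
      rw [mem_Ico, Fin.le_def, Fin.lt_def] at hi
      exact (periodicExt_mixPeriod_of_le_of_lt hk0 x y hi.1 hi.2).symm
    · exact (hammingDist_periodicExt_mixPeriod_le hk0 hk2.le x y
        fun i hi => hy i (by omega)).trans hd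
  calc ∑ z : Fin k → S, #(ballAgreeingOn I₂ (periodicExt hk0 z) t)
      ≤ ∑ _z : Fin k → S, ∑ i ∈ range (t + 1), (2 * s - k).choose i * (q - 1) ^ i :=
        sum_le_sum fun z _ => (card_ballAgreeingOn_le I₂ _ t).trans_eq (by rw [hcard, hq])
    _ = _ := by rw [sum_const, card_univ, Fintype.card_fun, Fintype.card_fin, hq, smul_eq_mul]
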